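/- Let p ∈ (0, 1/20) and α > 0. Let δ_j (j ≤ n) and δ_{ij} (i,j ≤ n) be i.i.d. Bernoulli(p) random variables, and set M = (δ_{ij})_{i,j≤n}. Let x ∈ ℝⁿ satisfy x*₂ ≥ α. Then Q(Σ_{j=1}^n x_j δ_j, α/2.1) ≤ exp(−1.9·p), and P(‖Mx‖ ≤ α·√(pn)/(7·√(ln(e/p)))) ≤ exp(−1.6·np). -/

import Mathlib

open MeasureTheory

/-- Euclidean norm of a vector in `ℝⁿ`. -/
noncomputable def eNorm {n : ℕ} (x : Fin n → ℝ) : ℝ := Real.sqrt (∑ i, (x i) ^ 2)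

/-- The `k`-th largest value of `(|x i|)_i` (one-indexed, for `1 ≤ k ≤ n`). -/
noncomputable def ordStat {n : ℕ} (x : Fin n → ℝ) (k : ℕ) : ℝ :=
  sSup {t : ℝ | k ≤ (Finset.univ.filter fun i => t ≤ |x i|).card}

/-- The Lévy concentration function `Q(ξ, t) = sup_λ P{|ξ - λ| ≤ t}`. -/
noncomputable def levyConc {Ω : Type*} [MeasurableSpace Ω] (μ : Measure Ω)
    (ξ : Ω → ℝ) (t : ℝ) : ℝ :=
  ⨆ l : ℝ, (μ {ω | |ξ ω - l| ≤ t}).toReal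

/-- `X` is a random vector with i.i.d. Bernoulli(p) coordinates. -/
def IsBernoulliVector {Ω : Type*} [MeasurableSpace Ω] (μ : Measure Ω) {n : ℕ}
    (X : Ω → Fin n → ℝ) (p : ℝ) : Prop :=
  (∀ ω i, X ω i = 0 ∨ X ω i = 1) ∧
  ∀ v : Fin n → ℝ, (∀ i, v i = 0 ∨ v i = 1) →
    μ {ω | X ω = v} =
      ENNReal.ofReal
        (p ^ (Finset.univ.filter fun i => v i = 1).card *
          (1 - p) ^ (Finset.univ.filter fun i => v i = 0).card)

/-- `M` is a random `n × n` matrix with i.i.d. Bernoulli(p) entries. -/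
def IsBernoulliMatrix {Ω : Type*} [MeasurableSpace Ω] (μ : Measure Ω) {n : ℕ}
    (M : Ω → Matrix (Fin n) (Fin n) ℝ) (p : ℝ) : Prop :=
  (∀ ω i j, M ω i j = 0 ∨ M ω i j = 1) ∧
  ∀ A : Matrix (Fin n) (Fin n) ℝ, (∀ i j, A i j = 0 ∨ A i j = 1) →
    μ {ω | M ω = A} =
      ENNReal.ofReal
        (p ^ (Finset.univ.filter (fun ij : Fin n × Fin n => A ij.1 ij.2 = 1)).card *
          (1 - p) ^ (Finset.univ.filter (fun ij : Fin n × Fin n => A ij.1 ij.2 = 0)).card)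


/-!
Condition on all coordinates except two, `i ≠ k`, with `|x i|, |x k| ≥ α`. The window
`|S - λ| ≤ α / 2.1` is shorter than `α`, so of the four corners `(δ_i, δ_k) ∈ {0,1}²` no two
adjacent ones put `S` in the window: the event meets at most one diagonal of the square, and its
conditional probability is at most `p² + (1 - p)² ≤ e^{-1.9 p}`.

If `‖M x‖ ≤ θ`, then at most `r = θ² / t²` rows have `|(M x)_i| > t`, so some set of `n - r`
rows lies in the window `[-t, t]`. The rows are independent copies of the first situation, and a
union bound over these sets gives `C(n, r) (p² + (1 - p)²)^{n - r}`. With `t = α / 2.1` one gets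
`r ≤ 0.09 p n / log(e/p)`, and then `C(n, r) ≤ (e n / r)^r ≤ e^{0.27 p n}` is absorbed by
`e^{-1.9 p (n - r)}`.
-/

open Finset

section ConfigWeight

variable {ι : Type*} [Fintype ι] {p : ℝ}

noncomputable def bernoulliWeight (p : ℝ) (c : Bool) : ℝ := if c then p else 1 - p

lemma bernoulliWeight_nonneg (hp₀ : 0 ≤ p) (hp₁ : p ≤ 1) (c : Bool) :
    0 ≤ bernoulliWeight p c := by
  cases c <;> simp [bernoulliWeight] <;> linarith

lemma sum_bernoulliWeight (p : ℝ) : ∑ c, bernoulliWeight p c = 1 := by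
  simp [bernoulliWeight]

noncomputable def configWeight (p : ℝ) (b : ι → Bool) : ℝ := ∏ i, bernoulliWeight p (b i)

lemma configWeight_nonneg (hp₀ : 0 ≤ p) (hp₁ : p ≤ 1) (b : ι → Bool) :
    0 ≤ configWeight p b :=
  prod_nonneg fun i _ => bernoulliWeight_nonneg hp₀ hp₁ (b i)

lemma sum_configWeight [DecidableEq ι] (p : ℝ) : ∑ b : ι → Bool, configWeight p b = 1 := by
  simp only [configWeight, ← Fintype.prod_sum, sum_bernoulliWeight, prod_const_one]

lemma configWeight_eq_pow (p : ℝ) (b : ι → Bool) :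
    configWeight p b = p ^ #{i | b i} * (1 - p) ^ #{i | b i = false} := by
  rw [configWeight, ← prod_filter_mul_prod_filter_not univ (fun i => b i = true)]
  simp only [Bool.not_eq_true]
  congr 1 <;> exact prod_eq_pow_card fun i hi => by simp_all [bernoulliWeight]

lemma sum_configWeight_mul_eq_sum_subtype_ne [DecidableEq ι] (i : ι) (x : ι → ℝ)
    (g : ℝ → ℝ) :
    ∑ b : ι → Bool, configWeight p b * g (∑ j, x j * (b j).toNat) =
      ∑ b : {j // j ≠ i} → Bool, configWeight p b *
        ∑ c, bernoulliWeight p c * g (x i * c.toNat + ∑ j : {j // j ≠ i}, x j * (b j).toNat) := by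
  rw [← (Equiv.funSplitAt i Bool).symm.sum_comp, Fintype.sum_prod_type, sum_comm]
  refine sum_congr rfl fun b _ => ?_
  rw [mul_sum]
  refine sum_congr rfl fun c _ => ?_
  have hne (j : {j // j ≠ i}) : (j : ι) = i ↔ False := iff_false_intro j.2
  simp [configWeight, Fintype.prod_eq_mul_prod_subtype_ne _ i,
    Fintype.sum_eq_add_sum_subtype_ne _ i, hne]
  ring

/-- An event without two adjacent corners of the square lies in a diagonal, of weight
`p² + (1 - p)²` or `2 p (1 - p)`. -/
lemma sum_bernoulliWeight_mul_sum_le (E : Bool → Bool → Prop) [DecidableRel E]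
    (h₁ : ∀ c₁ c₂, E c₁ c₂ → ¬E (!c₁) c₂) (h₂ : ∀ c₁ c₂, E c₁ c₂ → ¬E c₁ (!c₂)) :
    ∑ c₂, bernoulliWeight p c₂ * ∑ c₁, bernoulliWeight p c₁ * (if E c₁ c₂ then 1 else 0) ≤
      p ^ 2 + (1 - p) ^ 2 := by
  have h₁₀ := h₁ false; have h₁₁ := h₁ true; have h₂₀ := h₂ false; have h₂₁ := h₂ true
  simp only [Bool.not_false, Bool.not_true] at h₁₀ h₁₁ h₂₀ h₂₁
  simp only [Fintype.sum_bool, bernoulliWeight, if_true, Bool.false_eq_true, if_false]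
  by_cases e₀₀ : E false false <;> by_cases e₀₁ : E false true <;>
    by_cases e₁₀ : E true false <;> by_cases e₁₁ : E true true <;>
    simp_all <;> nlinarith [sq_nonneg (1 - 2 * p)]

lemma sum_configWeight_window_le [DecidableEq ι] (hp₀ : 0 ≤ p) (hp₁ : p ≤ 1) {x : ι → ℝ}
    {t : ℝ} {i k : ι} (hik : i ≠ k) (hi : 2 * t < |x i|) (hk : 2 * t < |x k|) (l : ℝ) :
    ∑ b with |∑ j, x j * (b j).toNat - l| ≤ t, configWeight p b ≤ p ^ 2 + (1 - p) ^ 2 := by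
  set g : ℝ → ℝ := fun s => if |s - l| ≤ t then 1 else 0
  have h_not_adjacent (a : ℝ) (ha : 2 * t < |a|) (c : Bool) (u : ℝ) :
      |a * c.toNat + u - l| ≤ t → ¬|a * (!c).toNat + u - l| ≤ t := by
    intro h h'
    rw [abs_le] at h h'
    cases c <;> cases abs_cases a <;> simp at h h' <;> linarith
  let k' : {j // j ≠ i} := ⟨k, hik.symm⟩
  rw [sum_filter, sum_congr rfl fun b _ => (mul_boole _ _).symm,
    sum_configWeight_mul_eq_sum_subtype_ne i x g,
    sum_configWeight_mul_eq_sum_subtype_ne k' (fun j => x j)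
      fun s => ∑ c, bernoulliWeight p c * g (x i * c.toNat + s)]
  calc _ ≤ ∑ b : {j // j ≠ k'} → Bool, configWeight p b * (p ^ 2 + (1 - p) ^ 2) := by
        gcongr with b
        · exact configWeight_nonneg hp₀ hp₁ b
        refine sum_bernoulliWeight_mul_sum_le _ (fun c₁ c₂ => ?_) (fun c₁ c₂ => ?_)
        · exact h_not_adjacent _ hi c₁ _
        · intro h h'
          rw [add_left_comm] at h h'
          exact h_not_adjacent _ hk c₂ _ h h'
    _ = p ^ 2 + (1 - p) ^ 2 := by rw [← sum_mul, sum_configWeight, one_mul]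

lemma sum_configWeight_forall_rows {κ : Type*} [Fintype κ] [DecidableEq κ] [DecidableEq ι]
    (T : Finset κ) (E : (ι → Bool) → Prop) [DecidablePred E] :
    ∑ b : κ × ι → Bool with ∀ i ∈ T, E fun j => b (i, j), configWeight p b =
      (∑ r with E r, configWeight p r) ^ #T := by
  rw [sum_filter, ← (Equiv.curry κ ι Bool).symm.sum_comp]
  have h_factor (B : κ → ι → Bool) :
      (if ∀ i ∈ T, E (B i) then configWeight p (Function.uncurry B) else 0) =
        ∏ i, if i ∈ T then (if E (B i) then configWeight p (B i) else 0)
          else configWeight p (B i) := by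
    simp only [configWeight, Fintype.prod_prod_type, Function.uncurry_apply_pair]
    split_ifs with hE
    · exact prod_congr rfl fun i _ => by split_ifs <;> simp_all
    · push Not at hE
      obtain ⟨i, hiT, hEi⟩ := hE
      exact (prod_eq_zero (mem_univ i) (by simp [hiT, hEi])).symm
  have h_row (i : κ) :
      ∑ r, (if i ∈ T then (if E r then configWeight p r else 0) else configWeight p r) =
        if i ∈ T then ∑ r with E r, configWeight p r else 1 := by
    split_ifs
    exacts [sum_filter _ _ |>.symm, sum_configWeight p]
  simp only [Equiv.curry_symm_apply, Function.uncurry_apply_pair, h_factor]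
  rw [← Fintype.prod_sum fun i r =>
      if i ∈ T then (if E r then configWeight p r else 0) else configWeight p r,
    prod_congr rfl fun i _ => h_row i, prod_ite_mem, univ_inter, prod_const]

end ConfigWeight

lemma exists_ne_le_abs_of_le_ordStat {n : ℕ} {x : Fin n → ℝ} {α : ℝ} (hα : 0 < α)
    (h : α ≤ ordStat x 2) : ∃ i k, i ≠ k ∧ α ≤ |x i| ∧ α ≤ |x k| := by
  rw [ordStat] at h
  set S := {t : ℝ | 2 ≤ #{i | t ≤ |x i|}}
  have h_pair (t : ℝ) (ht : t ∈ S) :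
      ∃ ik ∈ (univ : Finset (Fin n)).offDiag, t ≤ min |x ik.1| |x ik.2| := by
    obtain ⟨i, hi, k, hk, hik⟩ := one_lt_card.1 (Nat.lt_of_succ_le ht)
    exact ⟨(i, k), by simpa using hik, le_min (mem_filter.1 hi).2 (mem_filter.1 hk).2⟩
  obtain ⟨t₀, ht₀⟩ : S.Nonempty := by
    by_contra hS
    rw [Set.not_nonempty_iff_eq_empty] at hS
    rw [hS, Real.sSup_empty] at h
    exact hα.not_ge h
  obtain ⟨ik₀, hik₀, -⟩ := h_pair t₀ ht₀
  obtain ⟨ik, hik, h_max⟩ :=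
    exists_max_image _ (fun ik : Fin n × Fin n => min |x ik.1| |x ik.2|) ⟨ik₀, hik₀⟩
  have h_le : sSup S ≤ min |x ik.1| |x ik.2| := csSup_le ⟨t₀, ht₀⟩ fun t ht => by
    obtain ⟨ik', hik', ht'⟩ := h_pair t ht
    exact ht'.trans (h_max ik' hik')
  exact ⟨ik.1, ik.2, (mem_offDiag.1 hik).2.2, le_min_iff.1 (h.trans h_le)⟩

lemma card_lt_abs_mul_sq_le_sum_sq {ι : Type*} [Fintype ι] (y : ι → ℝ) {t : ℝ} (ht : 0 ≤ t) :
    (#{i | t < |y i|} : ℝ) * t ^ 2 ≤ ∑ i, y i ^ 2 := by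
  calc (#{i | t < |y i|} : ℝ) * t ^ 2 = ∑ i with t < |y i|, t ^ 2 := by
        rw [sum_const, nsmul_eq_mul]
    _ ≤ ∑ i with t < |y i|, y i ^ 2 := sum_le_sum fun i hi => by
        rw [← sq_abs (y i)]
        exact pow_le_pow_left₀ ht (mem_filter.1 hi).2.le 2
    _ ≤ ∑ i, y i ^ 2 := sum_le_sum_of_subset_of_nonneg (filter_subset _ _)
        fun i _ _ => sq_nonneg _

lemma exists_mem_powersetCard_abs_le_of_eNorm_le {n : ℕ} {y : Fin n → ℝ} {θ t : ℝ}
    (ht : 0 < t) (hy : eNorm y ≤ θ) :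
    ∃ T ∈ powersetCard (n - ⌊θ ^ 2 / t ^ 2⌋₊) (univ : Finset (Fin n)), ∀ i ∈ T, |y i| ≤ t := by
  have h_bad : #{i | t < |y i|} ≤ ⌊θ ^ 2 / t ^ 2⌋₊ := by
    refine Nat.le_floor ((le_div_iff₀ (by positivity)).2 ?_)
    exact (card_lt_abs_mul_sq_le_sum_sq y ht.le).trans (Real.sqrt_le_iff.1 hy).2
  have h_split := card_filter_add_card_filter_not (s := univ) fun i => |y i| ≤ t
  simp only [not_le, card_univ, Fintype.card_fin] at h_split
  obtain ⟨T, hT, hTcard⟩ := exists_subset_card_eq (s := {i | |y i| ≤ t})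
    (n := n - ⌊θ ^ 2 / t ^ 2⌋₊) (by omega)
  exact ⟨T, mem_powersetCard.2 ⟨subset_univ T, hTcard⟩, fun i hi => (mem_filter.1 (hT hi)).2⟩

section BernoulliFamily

variable {Ω : Type*} [MeasurableSpace Ω] {μ : Measure Ω} {p : ℝ}

lemma measure_preimage_le_sum_configWeight {ι : Type*} [Fintype ι] [DecidableEq ι]
    (hp₀ : 0 ≤ p) (hp₁ : p ≤ 1) (X : Ω → ι → ℝ) (hX01 : ∀ ω i, X ω i = 0 ∨ X ω i = 1)
    (hX : ∀ b : ι → Bool,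
      μ {ω | X ω = fun i => ((b i).toNat : ℝ)} = ENNReal.ofReal (configWeight p b))
    (s : Set (ι → ℝ)) [DecidablePred (· ∈ s)] :
    μ (X ⁻¹' s) ≤
      ENNReal.ofReal (∑ b with (fun i => ((b i).toNat : ℝ)) ∈ s, configWeight p b) := by
  have h_cover : X ⁻¹' s ⊆
      ⋃ b ∈ ({b | (fun i => ((b i).toNat : ℝ)) ∈ s} : Finset (ι → Bool)),
        {ω | X ω = fun i => ((b i).toNat : ℝ)} := by
    intro ω hω
    have hXb : X ω = fun i => ((decide (X ω i = 1)).toNat : ℝ) := by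
      funext i
      rcases hX01 ω i with h | h <;> simp [h]
    exact Set.mem_biUnion (by simpa [← hXb] using hω) hXb
  calc μ (X ⁻¹' s) ≤ _ := measure_mono h_cover
    _ ≤ _ := measure_biUnion_finset_le _ _
    _ = _ := by
      rw [ENNReal.ofReal_sum_of_nonneg fun b _ => configWeight_nonneg hp₀ hp₁ b]
      exact sum_congr rfl fun b _ => hX b

lemma IsBernoulliVector.measure_eq_configWeight {n : ℕ} {X : Ω → Fin n → ℝ}
    (hX : IsBernoulliVector μ X p) (b : Fin n → Bool) :
    μ {ω | X ω = fun i => ((b i).toNat : ℝ)} = ENNReal.ofReal (configWeight p b) := by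
  rw [hX.2 _ fun i => by cases b i <;> simp, configWeight_eq_pow]
  congr 4 <;> ext i <;> cases b i <;> simp

lemma IsBernoulliMatrix.measure_eq_configWeight {n : ℕ} {M : Ω → Matrix (Fin n) (Fin n) ℝ}
    (hM : IsBernoulliMatrix μ M p) (b : Fin n × Fin n → Bool) :
    μ {ω | (fun ij => M ω ij.1 ij.2) = fun ij => ((b ij).toNat : ℝ)} =
      ENNReal.ofReal (configWeight p b) := by
  have h_set : {ω | (fun ij => M ω ij.1 ij.2) = fun ij => ((b ij).toNat : ℝ)} =
      {ω | M ω = Matrix.of fun i j => ((b (i, j)).toNat : ℝ)} := by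
    ext ω
    simp [funext_iff, ← Matrix.ext_iff]
  rw [h_set, hM.2 _ fun i j => by cases b (i, j) <;> simp, configWeight_eq_pow]
  congr 4 <;> ext ij <;> cases b ij <;> simp

lemma levyConc_le_of_two_large_coords {n : ℕ} {t : ℝ} (hp₀ : 0 ≤ p) (hp₁ : p ≤ 1)
    {X : Ω → Fin n → ℝ} (hX : IsBernoulliVector μ X p) {x : Fin n → ℝ} {i k : Fin n}
    (hik : i ≠ k) (hi : 2 * t < |x i|) (hk : 2 * t < |x k|) :
    levyConc μ (fun ω => ∑ j, x j * X ω j) t ≤ p ^ 2 + (1 - p) ^ 2 :=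
  ciSup_le fun l => ENNReal.toReal_le_of_le_ofReal (by positivity) <|
    (measure_preimage_le_sum_configWeight hp₀ hp₁ X hX.1 hX.measure_eq_configWeight
      {v | |∑ j, x j * v j - l| ≤ t}).trans <|
    ENNReal.ofReal_le_ofReal (sum_configWeight_window_le hp₀ hp₁ hik hi hk l)

lemma measure_eNorm_mulVec_le {n : ℕ} {t : ℝ} (hp₀ : 0 ≤ p) (hp₁ : p ≤ 1)
    {M : Ω → Matrix (Fin n) (Fin n) ℝ} (hM : IsBernoulliMatrix μ M p) {x : Fin n → ℝ}
    {i k : Fin n} (hik : i ≠ k) (hi : 2 * t < |x i|) (hk : 2 * t < |x k|) (ht : 0 < t) (θ : ℝ) :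
    μ {ω | eNorm ((M ω).mulVec x) ≤ θ} ≤
      ENNReal.ofReal (n.choose (n - ⌊θ ^ 2 / t ^ 2⌋₊) *
        (p ^ 2 + (1 - p) ^ 2) ^ (n - ⌊θ ^ 2 / t ^ 2⌋₊)) := by
  set m := n - ⌊θ ^ 2 / t ^ 2⌋₊
  set E : Finset (Fin n) → Set (Fin n × Fin n → ℝ) :=
    fun T => {v | ∀ i ∈ T, |∑ j, x j * v (i, j)| ≤ t}
  have h_cover : {ω | eNorm ((M ω).mulVec x) ≤ θ} ⊆
      ⋃ T ∈ powersetCard m univ, (fun ω ij => M ω ij.1 ij.2) ⁻¹' E T := by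
    intro ω hω
    obtain ⟨T, hT, hTt⟩ := exists_mem_powersetCard_abs_le_of_eNorm_le ht hω
    refine Set.mem_biUnion hT fun i hi => ?_
    simpa [Matrix.mulVec, dotProduct, mul_comm] using hTt i hi
  have h_row : ∑ r : Fin n → Bool with |∑ j, x j * (r j).toNat| ≤ t, configWeight p r ≤
      p ^ 2 + (1 - p) ^ 2 := by
    simpa only [sub_zero] using sum_configWeight_window_le hp₀ hp₁ hik hi hk 0
  have h_rows (T : Finset (Fin n)) (hT : T ∈ powersetCard m univ) :
      μ ((fun ω ij => M ω ij.1 ij.2) ⁻¹' E T) ≤ ENNReal.ofReal ((p ^ 2 + (1 - p) ^ 2) ^ m) := by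
    refine (measure_preimage_le_sum_configWeight hp₀ hp₁ _ (fun ω ij => hM.1 ω ij.1 ij.2)
      hM.measure_eq_configWeight (E T)).trans (ENNReal.ofReal_le_ofReal ?_)
    rw [← (mem_powersetCard.1 hT).2]
    refine Eq.trans_le ?_ (pow_le_pow_left₀ (sum_nonneg fun b _ => configWeight_nonneg hp₀ hp₁ b)
      h_row #T)
    convert sum_configWeight_forall_rows T _ using 3
    rfl
  calc μ {ω | eNorm ((M ω).mulVec x) ≤ θ}
      ≤ ∑ T ∈ powersetCard m univ, μ ((fun ω ij => M ω ij.1 ij.2) ⁻¹' E T) :=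
        (measure_mono h_cover).trans (measure_biUnion_finset_le _ _)
    _ ≤ ∑ T ∈ powersetCard m univ, ENNReal.ofReal ((p ^ 2 + (1 - p) ^ 2) ^ m) :=
        sum_le_sum h_rows
    _ = _ := by
        rw [sum_const, card_powersetCard, card_univ, Fintype.card_fin, nsmul_eq_mul,
          ENNReal.ofReal_mul (Nat.cast_nonneg _), ENNReal.ofReal_natCast]

end BernoulliFamily

section Estimates

open Real

lemma Nat.choose_le_exp_mul_log (n r : ℕ) :
    (n.choose r : ℝ) ≤ Real.exp (r * Real.log (Real.exp 1 * n / r)) := by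
  rcases Nat.eq_zero_or_pos r with rfl | hr
  · simp
  rcases Nat.eq_zero_or_pos n with rfl | hn
  · simp [Nat.choose_eq_zero_of_lt hr]
  calc (n.choose r : ℝ) ≤ n ^ r / r.factorial := Nat.choose_le_pow_div r n
    _ = n ^ r * ((r : ℝ) ^ r / r.factorial) / (r : ℝ) ^ r := by field_simp
    _ ≤ n ^ r * Real.exp r / (r : ℝ) ^ r := by
        gcongr; exact Real.pow_div_factorial_le_exp (x := r) (Nat.cast_nonneg r) r
    _ = (Real.exp 1 * n / r) ^ r := by rw [div_pow, mul_pow, Real.exp_one_pow, mul_comm]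
    _ = Real.exp (r * Real.log (Real.exp 1 * n / r)) := by
        rw [Real.exp_nat_mul, Real.exp_log (by positivity)]

lemma monotoneOn_mul_log_exp_one_mul_div (N : ℝ) :
    MonotoneOn (fun x => x * log (exp 1 * N / x)) (Set.Icc 0 N) := by
  rintro R ⟨hR₀, -⟩ l ⟨hl₀, hlN⟩ hRl
  rcases hR₀.eq_or_lt with rfl | hR
  · rcases hl₀.eq_or_lt with rfl | hl
    · simp
    refine (zero_mul _).trans_le (mul_nonneg hl₀ (log_nonneg ?_))
    rw [le_div_iff₀ hl]
    nlinarith [add_one_le_exp 1]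
  have hN : 0 < N := by linarith
  have hl : 0 < l := hR.trans_le hRl
  have h_expand (x : ℝ) (hx : 0 < x) : log (exp 1 * N / x) = 1 + log N - log x := by
    rw [log_div (by positivity) hx.ne', log_mul (exp_pos 1).ne' hN.ne', log_exp]
  have h_ratio : R * (log l - log R) ≤ l - R := by
    calc R * (log l - log R) = R * log (l / R) := by rw [log_div hl.ne' hR.ne']
      _ ≤ R * (l / R - 1) := by gcongr; exact log_le_sub_one_of_pos (div_pos hl hR)
      _ = l - R := by field_simp
  have h_tail : 0 ≤ (l - R) * (log N - log l) :=
    mul_nonneg (by linarith) (by linarith [log_le_log hl hlN])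
  simp only [h_expand R hR, h_expand l hl]
  nlinarith

lemma sq_add_one_sub_sq_le_exp {p : ℝ} (hp₀ : 0 ≤ p) (hp : p ≤ 1 / 20) :
    p ^ 2 + (1 - p) ^ 2 ≤ exp (-(1.9 * p)) := by
  nlinarith [add_one_le_exp (-(1.9 * p))]

lemma choose_sub_mul_pow_le_exp {n r : ℕ} {p : ℝ} (hn : 0 < n) (hp₀ : 0 < p) (hp : p < 1 / 20)
    (hr : (r : ℝ) ≤ 0.09 * p * n / log (exp 1 / p)) :
    (n.choose (n - r) : ℝ) * (p ^ 2 + (1 - p) ^ 2) ^ (n - r) ≤ exp (-(1.6 * n * p)) := by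
  set L := log (exp 1 / p) with hL_def
  set l := 0.09 * p * n / L
  have hL : L = 1 - log p := by rw [hL_def, log_div (exp_pos 1).ne' hp₀.ne', log_exp]
  have hL₁ : 1 ≤ L := by linarith [log_neg hp₀ (by linarith : p < 1)]
  have hlL : l * L = 0.09 * p * n := div_mul_cancel₀ _ (by positivity)
  have hl₀ : 0 < l := by positivity
  have hln : l ≤ n := by
    rw [div_le_iff₀ (by positivity)]
    nlinarith
  have hrn : r ≤ n := by exact_mod_cast hr.trans hln
  -- `log (e n / l) = 1 + log L + log (100 / 9) + log (1 / p)`, each of the last three `≤ L - 1`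
  have h_log : log (exp 1 * n / l) ≤ 3 * L - 2 := by
    have h_eq : exp 1 * n / l = exp 1 * (L * (1 / p)) * (100 / 9) := by
      have : L ≠ 0 := by positivity
      simp only [l]
      field_simp
      ring
    rw [h_eq, log_mul (by positivity) (by norm_num), log_mul (by positivity) (by positivity),
      log_mul (by positivity) (by positivity), log_exp, one_div, log_inv]
    have : log (100 / 9) ≤ log p⁻¹ := log_le_log (by norm_num) (by
      rw [le_inv_comm₀ (by norm_num) hp₀]; linarith)
    rw [log_inv] at this
    linarith [log_le_sub_one_of_pos (by linarith : 0 < L)]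
  have h_mono : r * log (exp 1 * n / r) ≤ l * log (exp 1 * n / l) :=
    monotoneOn_mul_log_exp_one_mul_div n ⟨r.cast_nonneg, by exact_mod_cast hrn⟩ ⟨hl₀.le, hln⟩ hr
  calc (n.choose (n - r) : ℝ) * (p ^ 2 + (1 - p) ^ 2) ^ (n - r)
      ≤ exp (r * log (exp 1 * n / r)) * exp (-(1.9 * p)) ^ (n - r) := by
        rw [Nat.choose_symm hrn]
        gcongr
        exacts [Nat.choose_le_exp_mul_log n r, sq_add_one_sub_sq_le_exp hp₀.le hp.le]
    _ = exp (r * log (exp 1 * n / r) - 1.9 * p * (n - r)) := by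
        rw [← exp_nat_mul, ← exp_add, Nat.cast_sub hrn]
        ring_nf
    _ ≤ exp (-(1.6 * n * p)) := by
        gcongr
        nlinarith [mul_le_mul_of_nonneg_left h_log hl₀.le]

end Estimates

/-- Anti-concentration for vectors with two large coordinates. -/
theorem two_large_coords_anticoncentration :
    ∀ n : ℕ, ∀ p α : ℝ, 0 < p → p < 1 / 20 → 0 < α →
      ∀ x : Fin n → ℝ, α ≤ ordStat x 2 →
        (∀ (Ω : Type) [MeasurableSpace Ω] (μ : Measure Ω), IsProbabilityMeasure μ →
          ∀ X : Ω → Fin n → ℝ, IsBernoulliVector μ X p →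
            levyConc μ (fun ω => ∑ j, x j * X ω j) (α / 2.1) ≤ Real.exp (-(1.9 * p))) ∧
        (∀ (Ω : Type) [MeasurableSpace Ω] (μ : Measure Ω), IsProbabilityMeasure μ →
          ∀ M : Ω → Matrix (Fin n) (Fin n) ℝ, IsBernoulliMatrix μ M p →
            (μ {ω | eNorm ((M ω).mulVec x) ≤
                α * Real.sqrt (p * n) / (7 * Real.sqrt (Real.log (Real.exp 1 / p)))}).toReal
              ≤ Real.exp (-(1.6 * n * p))) := by
  intro n p α hp₀ hp hα x hx
  obtain ⟨i, k, hik, hi, hk⟩ := exists_ne_le_abs_of_le_ordStat hα hx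
  have hp₁ : p ≤ 1 := by linarith
  have ht : 2 * (α / 2.1) < α := by linarith [show 2 * (α / 2.1) = 20 / 21 * α by ring]
  refine ⟨fun Ω _ μ _ X hX => ?_, fun Ω _ μ _ M hM => ?_⟩
  · exact (levyConc_le_of_two_large_coords hp₀.le hp₁ hX hik (ht.trans_le hi)
      (ht.trans_le hk)).trans (sq_add_one_sub_sq_le_exp hp₀.le hp.le)
  set θ := α * Real.sqrt (p * n) / (7 * Real.sqrt (Real.log (Real.exp 1 / p)))
  have hL : 0 < Real.log (Real.exp 1 / p) :=
    Real.log_pos ((one_lt_div hp₀).2 (by linarith [Real.add_one_le_exp 1]))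
  -- `(2.1 / 7)² = 0.09`
  have hθ : θ ^ 2 / (α / 2.1) ^ 2 = 0.09 * p * n / Real.log (Real.exp 1 / p) := by
    simp only [θ, div_pow, mul_pow, Real.sq_sqrt (by positivity : (0 : ℝ) ≤ p * n),
      Real.sq_sqrt hL.le]
    field_simp
    ring
  refine ENNReal.toReal_le_of_le_ofReal (Real.exp_pos _).le <|
    (measure_eNorm_mulVec_le hp₀.le hp₁ hM hik (ht.trans_le hi) (ht.trans_le hk)
      (by positivity) θ).trans (ENNReal.ofReal_le_ofReal ?_)
  exact choose_sub_mul_pow_le_exp (Fin.pos i) hp₀ hp (hθ ▸ Nat.floor_le (by positivity))
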